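/- Let X = ([0,6]³ \ [2,4]³) ∩ ℤ³ be a digital cube with a cubical cavity. Then A = {0, 6}³ (the 8 outer corners) is a freezing set for (X, c_1). -/

import Mathlib

/-- A κ-path of some length m in S from a to b (consecutive points equal or adjacent). -/
def DigPath {α : Type*} (κ : α → α → Prop) (S : Set α) (a b : α) : Prop :=
  ∃ (m : ℕ) (r : ℕ → α), r 0 = a ∧ r m = b ∧ (∀ k, k ≤ m → r k ∈ S) ∧
    ∀ k, k < m → r k = r (k + 1) ∨ κ (r k) (r (k + 1))

/-- S is κ-connected: any two points of S are joined by a κ-path in S. -/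
def DigConnected {α : Type*} (κ : α → α → Prop) (S : Set α) : Prop :=
  ∀ a ∈ S, ∀ b ∈ S, DigPath κ S a b

/-- (κ,λ)-continuity via the adjacency characterization. -/
def DigCont {α β : Type*} (κ : α → α → Prop) (lam : β → β → Prop)
    (X : Set α) (f : α → β) : Prop :=
  ∀ x ∈ X, ∀ y ∈ X, κ x y → f x = f y ∨ lam (f x) (f y)

/-- A ⊆ X is a freezing set for (X, κ). -/
def FreezingSet {α : Type*} (κ : α → α → Prop) (X A : Set α) : Prop :=
  A ⊆ X ∧ ∀ g : α → α, (∀ x ∈ X, g x ∈ X) → DigCont κ κ X g →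
    (∀ a ∈ A, g a = a) → ∀ x ∈ X, g x = x

/-- The c_u adjacency on ℤⁿ: distinct points differing by exactly 1 in at most u
coordinates and equal in all others. -/
def cAdj (n u : ℕ) (x y : Fin n → ℤ) : Prop :=
  x ≠ y ∧ (∀ i, x i = y i ∨ |x i - y i| = 1) ∧
    (Finset.univ.filter (fun i => x i ≠ y i)).card ≤ u

/-- The boundary of A ⊆ ℤⁿ: points of A that are c_1-adjacent to a point outside A. -/
def Bd (n : ℕ) (A : Set (Fin n → ℤ)) : Set (Fin n → ℤ) :=
  {x ∈ A | ∃ y, y ∉ A ∧ cAdj n 1 x y}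

/-!
A c₁-continuous map does not increase c₁-path distances in `X`. From any point of the cube with
a cavity one can walk to a given outer corner `e` in `‖x - e‖₁` steps, moving one coordinate at
a time towards `e` without entering the cavity, so the path distance to a corner is the
ℓ¹-distance. Hence a continuous self-map fixing the corners satisfies
`‖g x - e‖₁ ≤ ‖x - e‖₁` for every corner `e`, and these distances determine a point of the cube.
-/

namespace Digital

open Set Function

variable {n : ℕ}

def l1Dist (x y : Fin n → ℤ) : ℤ := ∑ i, |x i - y i|

lemma l1Dist_nonneg (x y : Fin n → ℤ) : 0 ≤ l1Dist x y :=
  Finset.sum_nonneg fun _ _ => abs_nonneg _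

@[simp] lemma l1Dist_self (x : Fin n → ℤ) : l1Dist x x = 0 := by simp [l1Dist]

lemma l1Dist_comm (x y : Fin n → ℤ) : l1Dist x y = l1Dist y x := by
  simp only [l1Dist, abs_sub_comm]

lemma l1Dist_triangle (x y z : Fin n → ℤ) : l1Dist x z ≤ l1Dist x y + l1Dist y z := by
  rw [l1Dist, l1Dist, l1Dist, ← Finset.sum_add_distrib]
  exact Finset.sum_le_sum fun i _ => abs_sub_le (x i) (y i) (z i)

lemma l1Dist_update (x y : Fin n → ℤ) (i : Fin n) (v : ℤ) :
    l1Dist (update x i v) y = l1Dist x y - |x i - y i| + |v - y i| := by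
  have hx := Finset.add_sum_erase Finset.univ (fun j => |x j - y j|) (Finset.mem_univ i)
  have hu := Finset.add_sum_erase Finset.univ (fun j => |update x i v j - y j|)
    (Finset.mem_univ i)
  have herase : ∑ j ∈ Finset.univ.erase i, |update x i v j - y j| =
      ∑ j ∈ Finset.univ.erase i, |x j - y j| :=
    Finset.sum_congr rfl fun j hj => by rw [update_of_ne (Finset.ne_of_mem_erase hj)]
  simp only [update_self] at hu
  rw [l1Dist, l1Dist, ← hu, ← hx, herase]
  ring

lemma cAdj.l1Dist_le {u : ℕ} {x y : Fin n → ℤ} (h : cAdj n u x y) : l1Dist x y ≤ u := by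
  obtain ⟨-, hcoord, hcard⟩ := h
  set s := Finset.univ.filter fun i => x i ≠ y i
  have hsum : ∑ i ∈ s, |x i - y i| = l1Dist x y :=
    Finset.sum_subset (Finset.subset_univ _) fun i _ hi => by
      simp [show x i = y i by simpa [s] using hi]
  calc l1Dist x y = ∑ i ∈ s, |x i - y i| := hsum.symm
    _ ≤ s.card • (1 : ℤ) := Finset.sum_le_card_nsmul _ _ _ fun i hi =>
        ((hcoord i).resolve_left (Finset.mem_filter.mp hi).2).le
    _ ≤ u := by simpa using hcard

lemma cAdj_update_add {x : Fin n → ℤ} (i : Fin n) {d : ℤ} (hd : |d| = 1) :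
    cAdj n 1 x (update x i (x i + d)) := by
  have hd0 : d ≠ 0 := by rintro rfl; simp at hd
  refine ⟨fun h => hd0 (by simpa using congrFun h i), fun j => ?_, ?_⟩
  · rcases eq_or_ne j i with rfl | hji
    · simp [hd]
    · simp [update_of_ne hji]
  · refine Finset.card_le_one.mpr fun a ha b hb => ?_
    have key : ∀ j, x j ≠ update x i (x i + d) j → j = i := fun j hj =>
      by_contra fun hji => hj (update_of_ne hji _ _).symm
    rw [key a (Finset.mem_filter.mp ha).2, key b (Finset.mem_filter.mp hb).2]

def stepToward (x e : Fin n → ℤ) (i : Fin n) : Fin n → ℤ :=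
  update x i (x i + Int.sign (e i - x i))

lemma cAdj_stepToward {x e : Fin n → ℤ} {i : Fin n} (h : x i ≠ e i) :
    cAdj n 1 x (stepToward x e i) :=
  cAdj_update_add i (Int.abs_sign_of_ne_zero (sub_ne_zero.mpr h.symm))

lemma l1Dist_stepToward {x e : Fin n → ℤ} {i : Fin n} (h : x i ≠ e i) :
    l1Dist (stepToward x e i) e + 1 = l1Dist x e := by
  rw [stepToward, l1Dist_update]
  rcases h.lt_or_gt with h | h
  · rw [Int.sign_eq_one_of_pos (by omega)]; grind
  · rw [Int.sign_eq_neg_one_of_neg (by omega)]; grind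

lemma stepToward_mem_Icc {x e : Fin n → ℤ} {i : Fin n} {p q : ℤ}
    (hx : x i ∈ Icc p q) (he : e i ∈ Icc p q) : stepToward x e i i ∈ Icc p q := by
  rw [stepToward, update_self, mem_Icc]
  rw [mem_Icc] at hx he
  rcases lt_trichotomy (e i) (x i) with h | h | h
  · rw [Int.sign_eq_neg_one_of_neg (by omega)]; omega
  · simp [h]; omega
  · rw [Int.sign_eq_one_of_pos (by omega)]; omega

theorem l1Dist_map_le_of_exists_adj_closer {m : ℕ} {X : Set (Fin n → ℤ)} {e : Fin n → ℤ}
    {g : (Fin n → ℤ) → Fin m → ℤ}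
    (hstep : ∀ x ∈ X, x ≠ e → ∃ y ∈ X, cAdj n 1 x y ∧ l1Dist y e + 1 = l1Dist x e)
    (hg : DigCont (cAdj n 1) (cAdj m 1) X g) {x : Fin n → ℤ} (hx : x ∈ X) :
    l1Dist (g x) (g e) ≤ l1Dist x e := by
  by_cases hxe : x = e
  · simp [hxe]
  obtain ⟨y, hy, hxy, hcloser⟩ := hstep x hx hxe
  have hgxy : l1Dist (g x) (g y) ≤ 1 := by
    rcases hg x hx y hy hxy with h | h
    · simp [h]
    · exact_mod_cast cAdj.l1Dist_le h
  have hgy := l1Dist_map_le_of_exists_adj_closer hstep hg hy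
  linarith [l1Dist_triangle (g x) (g y) (g e)]
termination_by (l1Dist x e).toNat
decreasing_by have := l1Dist_nonneg y e; omega

def cube (p q : ℤ) : Set (Fin n → ℤ) := univ.pi fun _ => Icc p q

lemma mem_cube {p q : ℤ} {x : Fin n → ℤ} : x ∈ cube p q ↔ ∀ i, x i ∈ Icc p q :=
  mem_univ_pi

def corners (p q : ℤ) : Set (Fin n → ℤ) := univ.pi fun _ => {p, q}

lemma mem_corners {p q : ℤ} {x : Fin n → ℤ} : x ∈ corners p q ↔ ∀ i, x i = p ∨ x i = q := by
  simp [corners]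

lemma corners_subset_cube {p q : ℤ} (h : p ≤ q) : corners p q ⊆ (cube p q : Set (Fin n → ℤ)) :=
  fun e he => mem_cube.mpr fun i => by
    rcases mem_corners.mp he i with h' | h' <;> simp [h', h]

lemma exists_adj_closer_of_mem_cube_diff (hn : 2 ≤ n) {p q lo hi : ℤ} {e x : Fin n → ℤ}
    (he : e ∈ cube p q) (he' : ∀ i, e i ∉ Icc lo hi)
    (hx : x ∈ cube p q \ cube lo hi) (hxe : x ≠ e) :
    ∃ y ∈ cube p q \ cube lo hi, cAdj n 1 x y ∧ l1Dist y e + 1 = l1Dist x e := by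
  -- Move a coordinate other than one `j` with `x j ∉ [lo, hi]`; if only `x j` differs from
  -- `e j`, the untouched coordinates are those of `e`, which avoid `[lo, hi]`.
  suffices ∃ i, x i ≠ e i ∧ ∃ k, stepToward x e i k ∉ Icc lo hi by
    obtain ⟨i, hi, k, hk⟩ := this
    refine ⟨stepToward x e i, ⟨mem_cube.mpr fun k => ?_, fun h => hk (mem_cube.mp h k)⟩,
      cAdj_stepToward hi, l1Dist_stepToward hi⟩
    rcases eq_or_ne k i with rfl | hki
    · exact stepToward_mem_Icc (mem_cube.mp hx.1 k) (mem_cube.mp he k)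
    · rw [stepToward, update_of_ne hki]
      exact mem_cube.mp hx.1 k
  obtain ⟨j, hj⟩ : ∃ j, x j ∉ Icc lo hi := by simpa [mem_cube] using hx.2
  by_cases hother : ∃ i ≠ j, x i ≠ e i
  · obtain ⟨i, hij, hi⟩ := hother
    exact ⟨i, hi, j, by rwa [stepToward, update_of_ne hij.symm]⟩
  push Not at hother
  have : Nontrivial (Fin n) := Fin.nontrivial_iff_two_le.mpr hn
  obtain ⟨k, hkj⟩ := exists_ne j
  have hxj : x j ≠ e j := fun h => hxe <| funext fun i => by
    rcases eq_or_ne i j with rfl | hij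
    · exact h
    · exact hother i hij
  exact ⟨j, hxj, k, by rw [stepToward, update_of_ne hkj, hother k hkj]; exact he' k⟩

lemma l1Dist_add_l1Dist_opposite_corner {p q : ℤ} {x e : Fin n → ℤ} (hx : x ∈ cube p q)
    (he : e ∈ corners p q) : l1Dist x e + l1Dist x (fun i => p + q - e i) = n * (q - p) := by
  rw [l1Dist, l1Dist, ← Finset.sum_add_distrib]
  have hcoord : ∀ i, |x i - e i| + |x i - (p + q - e i)| = q - p := fun i => by
    have := mem_cube.mp hx i
    rw [mem_Icc] at this
    rcases mem_corners.mp he i with h | h <;> rw [h] <;> grind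
  simp [hcoord, mul_sub]

lemma opposite_mem_corners {p q : ℤ} {e : Fin n → ℤ} (he : e ∈ corners p q) :
    (fun i => p + q - e i) ∈ corners p q :=
  mem_corners.mpr fun i => by rcases mem_corners.mp he i with h | h <;> simp [h]

lemma eq_of_forall_corners_l1Dist_le {p q : ℤ} {x y : Fin n → ℤ} (hx : x ∈ cube p q)
    (hy : y ∈ cube p q) (h : ∀ e ∈ corners p q, l1Dist y e ≤ l1Dist x e) : y = x := by
  -- Opposite corners have constant total distance, so the bounds are equalities; comparing the
  -- corner `p` with the corner `p` changed to `q` in coordinate `i` then recovers `x i`.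
  have heq : ∀ e ∈ corners p q, l1Dist y e = l1Dist x e := fun e he =>
    le_antisymm (h e he) (by linarith [h _ (opposite_mem_corners he),
      l1Dist_add_l1Dist_opposite_corner hx he, l1Dist_add_l1Dist_opposite_corner hy he])
  funext i
  have hbase : (fun _ => p) ∈ (corners p q : Set (Fin n → ℤ)) :=
    mem_corners.mpr fun _ => .inl rfl
  have hi : update (fun _ => p) i q ∈ (corners p q : Set (Fin n → ℤ)) :=
    mem_corners.mpr fun k => by
      rcases eq_or_ne k i with rfl | hki
      · simp
      · simp [hki]
  have h0 := heq _ hbase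
  have h1 := heq _ hi
  rw [l1Dist_comm y, l1Dist_comm x, l1Dist_update, l1Dist_update, l1Dist_comm _ y,
    l1Dist_comm _ x, h0] at h1
  have hxi := mem_cube.mp hx i
  have hyi := mem_cube.mp hy i
  rw [mem_Icc] at hxi hyi
  grind

end Digital

open Digital in
/-- For the cube [0,6]³ with cavity [2,4]³ removed, the eight outer corners form a
freezing set for (X, c_1). -/
theorem cubeWithCavity_corners_freeze
    (X : Set (Fin 3 → ℤ))
    (hX : X = {x | (∀ i, 0 ≤ x i ∧ x i ≤ 6) ∧ ¬(∀ i, 2 ≤ x i ∧ x i ≤ 4)})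
    (A : Set (Fin 3 → ℤ)) (hA : A = {x | ∀ i, x i = 0 ∨ x i = 6}) :
    FreezingSet (cAdj 3 1) X A := by
  obtain rfl : X = cube 0 6 \ cube 2 4 := by rw [hX]; ext; simp [mem_cube]
  obtain rfl : A = corners 0 6 := by rw [hA]; ext; simp [mem_corners]
  have hcube : corners (0 : ℤ) 6 ⊆ (cube 0 6 : Set (Fin 3 → ℤ)) :=
    corners_subset_cube (by norm_num)
  have havoid : ∀ e ∈ corners (0 : ℤ) 6, ∀ i : Fin 3, e i ∉ Set.Icc (2 : ℤ) 4 := fun e he i => by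
    rcases mem_corners.mp he i with h | h <;> simp [h]
  refine ⟨fun e he => ⟨hcube he, fun h => havoid e he 0 (mem_cube.mp h 0)⟩,
    fun g hgX hg hfix x hx => eq_of_forall_corners_l1Dist_le hx.1 (hgX x hx).1 fun e he => ?_⟩
  calc l1Dist (g x) e = l1Dist (g x) (g e) := by rw [hfix e he]
    _ ≤ l1Dist x e := l1Dist_map_le_of_exists_adj_closer
        (fun y hy hye => exists_adj_closer_of_mem_cube_diff (by norm_num) (hcube he)
          (havoid e he) hy hye) hg hx
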